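/- arXiv:2307.05718 — 4 statements merged into one kernel-verified Lean document; each statement's English description precedes it below -/
import Mathlib

section
/- Every balanced connected conjugate skew gain graph is argument-wise distance compatible: for any two vertices u, v and any two shortest oriented paths P and Q from u to v, arg(φ(P)) − arg(φ(Q)) is an integer multiple of 2π (equivalently, φ(P)/φ(Q) is a positive real number). -/
open Complex SimpleGraph Finset

/-- The conjugate skew gain of a walk: the product of the skew gains of its
oriented edges in order. -/
def walkGain {V : Type*} (φ : V → V → ℂ) {G : SimpleGraph V} :
    {u v : V} → G.Walk u v → ℂ
  | _, _, .nil => 1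
  | u, _, .cons (v := w) _ p => φ u w * walkGain φ p

/-- A shortest oriented path from `u` to `v`. -/
def IsShortest {V : Type*} (G : SimpleGraph V) {u v : V} (p : G.Walk u v) : Prop :=
  p.IsPath ∧ p.length = G.dist u v

/-- A conjugate skew gain graph is balanced if the skew gain of every oriented
cycle `C` satisfies `φ(C) = |φ(C)|`. -/
def CSGBalanced {V : Type*} (G : SimpleGraph V) (φ : V → V → ℂ) : Prop :=
  ∀ (u : V) (c : G.Walk u u), c.IsCycle →
    walkGain φ c = (‖walkGain φ c‖ : ℂ)
/-- pairs -/
def DistCompatPair {V : Type*} (G : SimpleGraph V) (φ : V → V → ℂ) (u v : V) : Prop :=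
  ∀ p q : G.Walk u v, IsShortest G p → IsShortest G q → walkGain φ p = walkGain φ q

def ModCompatPair {V : Type*} (G : SimpleGraph V) (φ : V → V → ℂ) (u v : V) : Prop :=
  ∀ p q : G.Walk u v, IsShortest G p → IsShortest G q →
    ‖walkGain φ p‖ = ‖walkGain φ q‖

def ArgCompatPair {V : Type*} (G : SimpleGraph V) (φ : V → V → ℂ) (u v : V) : Prop :=
  ∀ p q : G.Walk u v, IsShortest G p → IsShortest G q →
    ∃ r : ℝ, 0 < r ∧ walkGain φ p / walkGain φ q = (r : ℂ)

noncomputable def Dmat {V : Type*} [Fintype V] [DecidableEq V] (G : SimpleGraph V)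
    (g : V → V → ℂ) : Matrix V V ℂ :=
  fun u v => if u = v then 0 else (G.dist u v : ℂ) * g u v

section Aux

variable {V : Type*} {G : SimpleGraph V} (φ : V → V → ℂ)

@[simp] lemma walkGain_nil {u : V} : walkGain φ (SimpleGraph.Walk.nil : G.Walk u u) = 1 := rfl

@[simp] lemma walkGain_cons {u v w : V} (h : G.Adj u v) (p : G.Walk v w) :
    walkGain φ (SimpleGraph.Walk.cons h p) = φ u v * walkGain φ p := rfl

lemma walkGain_append {u v w : V} (p : G.Walk u v) (q : G.Walk v w) :
    walkGain φ (p.append q) = walkGain φ p * walkGain φ q := by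
  induction p with
  | nil => simp
  | cons h p ih => simp [Walk.cons_append, ih, mul_assoc]

lemma walkGain_ne_zero (hne : ∀ u v, G.Adj u v → φ u v ≠ 0) {u v : V} (p : G.Walk u v) :
    walkGain φ p ≠ 0 := by
  induction p with
  | nil => simp
  | cons h p ih => exact mul_ne_zero (hne _ _ h) ih

lemma walkGain_reverse (hsym : ∀ u v, G.Adj u v → φ v u = (starRingEnd ℂ) (φ u v))
    {u v : V} (p : G.Walk u v) :
    walkGain φ p.reverse = (starRingEnd ℂ) (walkGain φ p) := by
  induction p with
  | nil => simp
  | cons h p ih =>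
    rw [Walk.reverse_cons, walkGain_append, ih]
    simp [hsym _ _ h, mul_comm]

lemma walkGain_rotate [DecidableEq V] {u w : V} (c : G.Walk u u) (hw : w ∈ c.support) :
    walkGain φ (c.rotate w hw) = walkGain φ c := by
  conv_rhs => rw [← c.take_spec hw]
  rw [Walk.rotate, walkGain_append, walkGain_append, mul_comm]

end Aux

section Main

variable {V : Type*} {G : SimpleGraph V} (φ : V → V → ℂ)

lemma walk_length_rotate [DecidableEq V] {u w : V} (c : G.Walk u u) (hw : w ∈ c.support) :
    (c.rotate w hw).length = c.length := by
  have h1 := congrArg SimpleGraph.Walk.length (c.take_spec hw)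
  rw [Walk.length_append] at h1
  rw [Walk.rotate, Walk.length_append]
  omega

lemma closedWalkGain_pos (hne : ∀ u v, G.Adj u v → φ u v ≠ 0)
    (hsym : ∀ u v, G.Adj u v → φ v u = (starRingEnd ℂ) (φ u v))
    (hbal : CSGBalanced G φ) :
    ∀ (n : ℕ) (u : V) (c : G.Walk u u), c.length = n →
      ∃ r : ℝ, 0 < r ∧ walkGain φ c = (r : ℂ) := by
  classical
  intro n
  induction n using Nat.strong_induction_on with
  | _ n ih =>
    intro u c hlen
    cases c with
    | nil => exact ⟨1, one_pos, by simp⟩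
    | cons h p =>
      rename_i v
      by_cases hnd : p.support.Nodup
      · have hp : p.IsPath := (SimpleGraph.Walk.isPath_def p).mpr hnd
        by_cases hedge : s(u, v) ∈ p.edges
        · -- p must be the single edge back from v to u
          cases p with
          | nil => exact absurd rfl h.ne
          | cons h₂ p₂ =>
            rename_i w
            rw [Walk.edges_cons, List.mem_cons] at hedge
            rcases hedge with heq | hmem
            · have hw : w = u := by
                rw [Sym2.eq_iff] at heq
                rcases heq with ⟨h1, h2⟩ | ⟨h1, h2⟩
                · exact absurd h1 h.ne
                · exact h1.symm
              subst hw
              have hp₂ : p₂ = Walk.nil := Walk.isPath_iff_eq_nil.mp hp.of_cons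
              subst hp₂
              refine ⟨Complex.normSq (φ w v), Complex.normSq_pos.mpr (hne _ _ h), ?_⟩
              simp only [walkGain_cons, walkGain_nil, mul_one, hsym _ _ h, Complex.mul_conj]
            · rw [Walk.support_cons, List.nodup_cons] at hnd
              exact absurd (Walk.snd_mem_support_of_mem_edges p₂ hmem) hnd.1
        · have hc : (Walk.cons h p).IsCycle := (Walk.cons_isCycle_iff p h).mpr ⟨hp, hedge⟩
          exact ⟨‖walkGain φ (Walk.cons h p)‖,
            norm_pos_iff.mpr (walkGain_ne_zero φ hne _), hbal u _ hc⟩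
      · obtain ⟨w, hwdup⟩ := List.exists_duplicate_iff_not_nodup.mpr hnd
        have hw2 : 2 ≤ p.support.count w := List.duplicate_iff_two_le_count.mp hwdup
        have hwmem : w ∈ (Walk.cons h p).support := by
          rw [Walk.support_cons]; exact List.mem_cons_of_mem _ hwdup.mem
        have hrotlen : ((Walk.cons h p).rotate w hwmem).length = n := by
          rw [walk_length_rotate]; exact hlen
        have hrotgain := walkGain_rotate φ (Walk.cons h p) hwmem
        have hrotcount : 2 ≤ ((Walk.cons h p).rotate w hwmem).support.tail.count w := by
          have hperm := (Walk.support_rotate (Walk.cons h p) w hwmem).perm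
          rw [hperm.count_eq]
          simpa [Walk.support_cons] using hw2
        cases hc' : (Walk.cons h p).rotate w hwmem with
        | nil =>
          rw [hc'] at hrotlen
          rw [Walk.length_cons] at hlen
          simp only [Walk.length_nil] at hrotlen
          omega
        | cons h' p' =>
          rename_i x
          rw [hc'] at hrotlen hrotgain hrotcount
          rw [Walk.support_cons, List.tail_cons] at hrotcount
          have hwp' : w ∈ p'.support := List.count_pos_iff.mp (by omega)
          set q := p'.takeUntil w hwp' with hqdef
          set r := p'.dropUntil w hwp' with hrdef
          have hspec : q.append r = p' := p'.take_spec hwp'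
          have hq1 : q.support.count w = 1 := p'.count_support_takeUntil_eq_one hwp'
          have hrtail : 1 ≤ r.support.tail.count w := by
            have hsupp : p'.support = q.support ++ r.support.tail := by
              rw [← hspec, Walk.support_append]
            rw [hsupp, List.count_append, hq1] at hrotcount; omega
          have hrpos : 0 < r.length := by
            cases hr : r with
            | nil => rw [hr] at hrtail; simp at hrtail
            | cons h'' p'' => rw [Walk.length_cons]; omega
          have hqlen : q.length + r.length = p'.length := by
            have := congrArg SimpleGraph.Walk.length hspec
            rwa [Walk.length_append] at this
          have hlen' : p'.length + 1 = n := by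
            rw [Walk.length_cons] at hrotlen; exact hrotlen
          obtain ⟨r1, hr1, hg1⟩ := ih (q.length + 1) (by omega) w (Walk.cons h' q) (by simp)
          obtain ⟨r2, hr2, hg2⟩ := ih r.length (by omega) w r rfl
          refine ⟨r1 * r2, mul_pos hr1 hr2, ?_⟩
          rw [← hrotgain, ← hspec, walkGain_cons, walkGain_append]
          rw [walkGain_cons] at hg1
          rw [← mul_assoc, hg1, hg2]
          push_cast
          ring

end Main

/-- Every balanced connected conjugate skew gain graph is argument-wise distance
compatible. -/
theorem balanced_imp_argwise_distance_compatible {V : Type*} (G : SimpleGraph V)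
    (φ : V → V → ℂ) (hconn : G.Connected)
    (hne : ∀ u v, G.Adj u v → φ u v ≠ 0)
    (hsym : ∀ u v, G.Adj u v → φ v u = (starRingEnd ℂ) (φ u v))
    (hbal : CSGBalanced G φ) :
    ∀ u v : V, ArgCompatPair G φ u v := by
  intro u v p q _ _
  set gp := walkGain φ p with hgp
  set gq := walkGain φ q with hgq
  have hq0 : gq ≠ 0 := walkGain_ne_zero φ hne q
  have hnsq0 : ((Complex.normSq gq : ℝ) : ℂ) ≠ 0 := by
    exact_mod_cast (Complex.normSq_pos.mpr hq0).ne'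
  obtain ⟨r, hr, hg⟩ := closedWalkGain_pos φ hne hsym hbal (p.append q.reverse).length u
    (p.append q.reverse) rfl
  rw [walkGain_append, walkGain_reverse φ hsym] at hg
  refine ⟨r / Complex.normSq gq, div_pos hr (Complex.normSq_pos.mpr hq0), ?_⟩
  push_cast
  rw [div_eq_div_iff hq0 hnsq0, ← Complex.mul_conj, ← hg]
  ring
end

section
/- Switching a conjugate skew gain graph by a function ζ: V → 𝕋 (complex numbers of modulus 1), which replaces φ(uv) by conj(ζ(u))·φ(uv)·ζ(v), preserves distance compatibility: a pair of vertices u, v is distance compatible in G^φ if and only if it is distance compatible in G^{φ^ζ}. -/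
open Complex SimpleGraph Finset

lemma walkGain_switch {V : Type*} {G : SimpleGraph V} (φ : V → V → ℂ)
    (ζ : V → ℂ) (hζ : ∀ v, ‖ζ v‖ = 1) :
    ∀ {u v : V} (p : G.Walk u v),
      walkGain (fun a b => (starRingEnd ℂ) (ζ a) * φ a b * ζ b) p
        = (starRingEnd ℂ) (ζ u) * walkGain φ p * ζ v := by
  intro u v p
  induction p with
  | nil =>
      simp [walkGain, mul_comm]
      rw [Complex.mul_conj, ← Complex.sq_norm, hζ]
      norm_num
  | @cons a b c hab p ih =>
      have hb : ζ b * (starRingEnd ℂ) (ζ b) = 1 := by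
        rw [Complex.mul_conj, ← Complex.sq_norm, hζ]; norm_num
      simp only [walkGain, ih]
      linear_combination ((starRingEnd ℂ) (ζ a) * φ a b * walkGain φ p * ζ c) * hb

/-- Switching by a unimodular function `ζ` preserves distance compatibility of a
pair of vertices. -/
theorem switching_preserves_distance_compatible_pair {V : Type*}
    (G : SimpleGraph V) (φ : V → V → ℂ)
    (hne : ∀ u v, G.Adj u v → φ u v ≠ 0)
    (hsym : ∀ u v, G.Adj u v → φ v u = (starRingEnd ℂ) (φ u v))
    (ζ : V → ℂ) (hζ : ∀ v, ‖ζ v‖ = 1) (u v : V) :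
    DistCompatPair G φ u v ↔
      DistCompatPair G (fun a b => (starRingEnd ℂ) (ζ a) * φ a b * ζ b) u v := by
  have hzu : (starRingEnd ℂ) (ζ u) ≠ 0 := by
    simp only [ne_eq, map_eq_zero]
    intro h; have := hζ u; rw [h] at this; simp at this
  have hzv : ζ v ≠ 0 := by
    intro h; have := hζ v; rw [h] at this; simp at this
  constructor
  · intro H p q hp hq
    rw [walkGain_switch φ ζ hζ, walkGain_switch φ ζ hζ, H p q hp hq]
  · intro H p q hp hq
    have := H p q hp hq
    rw [walkGain_switch φ ζ hζ, walkGain_switch φ ζ hζ] at this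
    have h2 := mul_right_cancel₀ hzv this
    rw [mul_comm _ (walkGain φ p), mul_comm _ (walkGain φ q)] at h2
    exact mul_right_cancel₀ hzu h2
end

section
/- A modulus-wise distance compatible conjugate skew gain graph G^φ is balanced if and only if the associated complete conjugate skew gain graph K_n^{φ'}, defined by φ'(uv) = φ_{(u,v)}·d(u,v) on the complete graph on V(G), is balanced. -/
open Complex SimpleGraph Finset

section Aux
variable {V : Type*} {G : SimpleGraph V} (φ : V → V → ℂ)

lemma abs_mul_helper {x y z : ℂ} (hx : x = y * z)
    (hy : y = (‖y‖ : ℂ)) (hz : z = (‖z‖ : ℂ)) :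
    x = (‖x‖ : ℂ) := by
  rw [hx, norm_mul, Complex.ofReal_mul, ← hy, ← hz]

lemma eq_abs_of_eq_nonneg {x : ℂ} {s : ℝ} (hs : 0 ≤ s) (hx : x = (s : ℂ)) :
    x = (‖x‖ : ℂ) := by
  rw [hx, Complex.norm_real, Real.norm_eq_abs, _root_.abs_of_nonneg hs]

lemma closedWalk_gain
    (hsym : ∀ u v, G.Adj u v → φ v u = (starRingEnd ℂ) (φ u v))
    (hbal : CSGBalanced G φ) :
    ∀ (n : ℕ) (u : V) (w : G.Walk u u), w.length ≤ n →
      walkGain φ w = (‖walkGain φ w‖ : ℂ) := by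
  intro n
  induction n with
  | zero =>
    intro u w hw
    cases w with
    | nil => simp
    | cons h p => simp [Walk.length_cons] at hw
  | succ n ih =>
    classical
    intro u w hw
    cases w with
    | nil => simp
    | @cons _ v _ h p =>
      by_cases hnd : p.support.Nodup
      · by_cases he : s(u, v) ∈ p.edges
        · -- p must be a single edge back to u
          cases p with
          | nil => exact absurd rfl h.ne
          | @cons _ w2 _ h2 p2 =>
            simp only [Walk.edges_cons, List.mem_cons] at he
            rcases he with he | he
            · rw [Sym2.eq_iff] at he
              rcases he with ⟨hu, hv⟩ | ⟨hu, _⟩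
              · exact absurd hu h.ne
              · subst hu
                -- p2 : Walk u u with nodup support context; show p2 = nil
                cases p2 with
                | nil =>
                  simp only [walkGain_cons, walkGain_nil, mul_one, hsym u v h,
                    Complex.mul_conj]
                  rw [Complex.norm_real, Real.norm_eq_abs, _root_.abs_of_nonneg (Complex.normSq_nonneg _)]
                | @cons _ y _ h3 p3 =>
                  exfalso
                  simp only [Walk.support_cons, List.nodup_cons] at hnd
                  exact hnd.2.1 (by simp [Walk.support_cons, p3.end_mem_support])
            · exfalso
              have hv2 : v ∈ p2.support := p2.snd_mem_support_of_mem_edges he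
              simp only [Walk.support_cons, List.nodup_cons] at hnd
              exact hnd.1 hv2
        · have hc : (Walk.cons h p).IsCycle :=
            (Walk.cons_isCycle_iff p h).mpr ⟨(Walk.isPath_def p).mpr hnd, he⟩
          exact hbal u _ hc
      · obtain ⟨x, hdup⟩ := List.exists_duplicate_iff_not_nodup.mpr hnd
        have hmem : x ∈ p.support := hdup.mem
        have hcount : 2 ≤ List.count x p.support :=
          List.duplicate_iff_two_le_count.mp hdup
        set a := p.takeUntil x hmem with ha
        set d := p.dropUntil x hmem with hd
        have hspec : p = a.append d := (p.take_spec hmem).symm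
        have hxd : x ∈ d.support.tail := by
          have h1 : List.count x a.support = 1 :=
            p.count_support_takeUntil_eq_one hmem
          have : p.support = a.support ++ d.support.tail := by
            rw [hspec]; exact Walk.support_append a d
          rw [this, List.count_append, h1] at hcount
          have : 1 ≤ List.count x d.support.tail := by omega
          exact List.count_pos_iff.mp (by omega)
        cases hdd : d with
        | nil => rw [hdd] at hxd; simp at hxd
        | @cons _ y _ h3 d2 =>
          have hxd2 : x ∈ d2.support := by
            rw [hdd] at hxd; simpa [Walk.support_cons] using hxd
          set t2 := d2.takeUntil x hxd2 with ht2
          set r := d2.dropUntil x hxd2 with hr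
          have hspec2 : d2 = t2.append r := (d2.take_spec hxd2).symm
          -- c : closed walk at x, w' : shorter closed walk at u
          set c : G.Walk x x := Walk.cons h3 t2 with hc
          set w' : G.Walk u u := Walk.cons h (a.append r) with hw'
          have hgain : walkGain φ (Walk.cons h p) = walkGain φ w' * walkGain φ c := by
            rw [hw', hc]
            simp only [walkGain_cons, walkGain_append]
            rw [hspec, hdd, hspec2]
            simp only [walkGain_cons, walkGain_append]
            ring
          have hlen : (Walk.cons h p).length
              = w'.length + c.length := by
            rw [hw', hc, hspec, hdd, hspec2]
            simp only [Walk.length_cons, Walk.length_append]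
            omega
          simp only [Walk.length_cons] at hlen hw
          have hl1 : w'.length ≤ n := by
            have : 1 ≤ c.length := by rw [hc]; simp [Walk.length_cons]
            omega
          have hl2 : c.length ≤ n := by
            have : 1 ≤ w'.length := by rw [hw']; simp [Walk.length_cons]
            omega
          exact abs_mul_helper hgain (ih u w' hl1) (ih x c hl2)

end Aux

lemma walkGain_mapLe {V : Type*} {G G' : SimpleGraph V} (h : G ≤ G') (ψ : V → V → ℂ)
    {u v : V} (p : G.Walk u v) :
    walkGain ψ (p.mapLe h) = walkGain ψ p := by
  induction p with
  | nil => rfl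
  | cons h2 p ih =>
    simp only [SimpleGraph.Walk.mapLe, SimpleGraph.Walk.map_cons]
    rw [walkGain_cons, walkGain_cons, ih]
    rfl


/-- A modulus-wise distance compatible conjugate skew gain graph `G^φ` is
balanced if and only if the associated complete conjugate skew gain graph
`K_n^{φ'}`, with `φ'(uv) = φ_{(u,v)}·d(u,v)`, is balanced. -/
theorem balanced_iff_complete_balanced {V : Type*} [Fintype V]
    (G : SimpleGraph V) (φ : V → V → ℂ) (hconn : G.Connected)
    (hne : ∀ u v, G.Adj u v → φ u v ≠ 0)
    (hsym : ∀ u v, G.Adj u v → φ v u = (starRingEnd ℂ) (φ u v))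
    (hmod : ∀ u v : V, ModCompatPair G φ u v)
    (g : V → V → ℂ)
    (hg : ∀ u v : V, u ≠ v → ∃ p : G.Walk u v, IsShortest G p ∧ walkGain φ p = g u v)
    (hgsym : ∀ u v : V, g v u = (starRingEnd ℂ) (g u v)) :
    CSGBalanced G φ ↔
      CSGBalanced (⊤ : SimpleGraph V) (fun u v => (G.dist u v : ℂ) * g u v) := by
  classical
  have hedge : ∀ u v, G.Adj u v → ((G.dist u v : ℂ) * g u v) = φ u v := by
    intro u v huv
    have hd : G.dist u v = 1 := SimpleGraph.dist_eq_one_iff_adj.mpr huv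
    obtain ⟨p, hps, hpg⟩ := hg u v huv.ne
    have hl : p.length = 1 := by rw [hps.2, hd]
    cases p with
    | nil => simp at hl
    | @cons _ w2 _ h2 p2 =>
      cases p2 with
      | nil =>
        rw [hd, ← hpg, walkGain_cons, walkGain_nil]
        push_cast; ring
      | cons h3 p3 => simp [SimpleGraph.Walk.length_cons] at hl
  have hGwalk : ∀ {a b : V} (p : G.Walk a b),
      walkGain (fun x y => (G.dist x y : ℂ) * g x y) p = walkGain φ p := by
    intro a b p
    induction p with
    | nil => rfl
    | cons h2 p ih => rw [walkGain_cons, walkGain_cons, ih, hedge _ _ h2]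
  constructor
  · intro hbal
    have key : ∀ (u v : V) (c : (⊤ : SimpleGraph V).Walk u v),
        ∃ (W : G.Walk u v) (r : ℝ), 0 < r ∧
          walkGain (fun a b => (G.dist a b : ℂ) * g a b) c = (r : ℂ) * walkGain φ W := by
      intro u v c
      induction c with
      | nil => exact ⟨SimpleGraph.Walk.nil, 1, one_pos, by simp⟩
      | @cons a b _ hab c2 ih =>
        obtain ⟨W2, r2, hr2, he2⟩ := ih
        obtain ⟨p, hps, hpg⟩ := hg a b hab.ne
        refine ⟨p.append W2, (G.dist a b) * r2, ?_, ?_⟩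
        · exact mul_pos (by exact_mod_cast hconn.pos_dist_of_ne hab.ne) hr2
        · rw [walkGain_cons, walkGain_append, he2, ← hpg]
          push_cast; ring
    intro u c hc
    obtain ⟨W, r, hr, he⟩ := key u u c
    have hW := closedWalk_gain φ hsym hbal W.length u W le_rfl
    refine eq_abs_of_eq_nonneg
      (s := r * ‖walkGain φ W‖)
      (mul_nonneg hr.le (norm_nonneg _)) ?_
    rw [he, hW, Complex.ofReal_mul, Complex.norm_real, Real.norm_eq_abs, _root_.abs_of_nonneg (norm_nonneg _)]
  · intro hbal u c hc
    have hc' : (c.mapLe (le_top : G ≤ ⊤)).IsCycle :=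
      (SimpleGraph.Walk.mapLe_isCycle le_top).mpr hc
    have hb := hbal u (c.mapLe le_top) hc'
    rwa [walkGain_mapLe, hGwalk] at hb
end

section
/- Let C_n^φ be a conjugate skew gain graph on the odd cycle C_n with n = 2p+1, where every edge skew gain has modulus k > 0 and one distinguished edge has skew gain k·e^{iθ} while all other edges have skew gain k. Then the eigenvalues of its distance matrix are λ_j = 2·∑_{r=1}^{p} r·k^r·cos(r·θ_j) for j = 0, 1, …, n−1, where θ_j = (2πj + θ)/n. -/
open Complex SimpleGraph Finset

section aux
variable (p n : ℕ) (k θ : ℝ) (j : Fin n)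

/-- abbreviation for the angle -/
noncomputable def ocAngle (θ : ℝ) (n : ℕ) (j : Fin n) : ℝ := (2 * Real.pi * j.val + θ) / n

noncomputable def ocX (θ : ℝ) (n : ℕ) (j : Fin n) : ℂ := Complex.exp ((ocAngle θ n j : ℝ) * Complex.I)

noncomputable def ocC (p n : ℕ) (k θ : ℝ) (j : Fin n) (a : ℕ) : ℂ :=
  if a ≤ p then (a : ℂ) * (k : ℂ) ^ a * ocX θ n j ^ a
  else ((n - a : ℕ) : ℂ) * (k : ℂ) ^ (n - a) * Complex.exp (-θ * Complex.I) * ocX θ n j ^ a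

lemma ocX_pow (m : ℕ) : ocX θ n j ^ m = Complex.exp (((m : ℝ) * ocAngle θ n j) * Complex.I) := by
  rw [ocX, ← Complex.exp_nat_mul]
  push_cast
  ring_nf

lemma oc_n_angle (hn : 0 < n) : (n : ℝ) * ocAngle θ n j = 2 * Real.pi * j.val + θ := by
  rw [ocAngle]
  field_simp

lemma ocX_pow_n (hn : 0 < n) : ocX θ n j ^ n = Complex.exp (θ * Complex.I) := by
  rw [ocX_pow]
  have h : ((n : ℂ)) * ((ocAngle θ n j : ℝ) : ℂ) * Complex.I
      = ((j.val : ℕ) : ℂ) * (2 * (Real.pi : ℂ) * Complex.I) + (θ : ℂ) * Complex.I := by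
    have h2 : (((n : ℝ) * ocAngle θ n j : ℝ) : ℂ) = ((2 * Real.pi * j.val + θ : ℝ) : ℂ) := by
      rw [oc_n_angle n θ j hn]
    push_cast at h2 ⊢
    rw [h2]
    push_cast
    ring
  push_cast
  push_cast at h
  rw [h, Complex.exp_add, Complex.exp_nat_mul_two_pi_mul_I, one_mul]
end aux

section aux2
variable (p n : ℕ) (k θ : ℝ) (j : Fin n)

lemma oc_back (hn : 0 < n) (a : ℕ) (h2 : a < n) :
    Complex.exp (-θ * Complex.I) * ocX θ n j ^ a
      = Complex.exp ((-(((n - a : ℕ) : ℝ) * ocAngle θ n j) : ℝ) * Complex.I) := by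
  rw [ocX_pow, ← Complex.exp_add]
  have key : (-θ : ℂ) * Complex.I + (((a : ℝ) * ocAngle θ n j : ℝ) : ℂ) * Complex.I
      = ((j.val : ℕ) : ℂ) * (2 * (Real.pi : ℂ) * Complex.I)
        + ((-(((n - a : ℕ) : ℝ) * ocAngle θ n j) : ℝ) : ℂ) * Complex.I := by
    have hreal : -θ + (a : ℝ) * ocAngle θ n j
        = (j.val : ℝ) * (2 * Real.pi) + (-(((n - a : ℕ) : ℝ) * ocAngle θ n j)) := by
      have h := oc_n_angle n θ j hn
      have hcast : ((n - a : ℕ) : ℝ) = (n : ℝ) - (a : ℝ) := by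
        push_cast [h2.le]; ring
      rw [hcast]
      linear_combination h
    have hC : ((-θ + (a : ℝ) * ocAngle θ n j : ℝ) : ℂ)
        = (((j.val : ℝ) * (2 * Real.pi) + (-(((n - a : ℕ) : ℝ) * ocAngle θ n j)) : ℝ) : ℂ) := by
      exact_mod_cast congrArg Complex.ofReal hreal
    push_cast at hC ⊢
    linear_combination Complex.I * hC
  push_cast at key ⊢
  rw [key, Complex.exp_add, Complex.exp_nat_mul_two_pi_mul_I, one_mul]
end aux2

section aux3
variable (p n : ℕ) (k θ : ℝ) (j : Fin n)

lemma ocC_sum (hn : n = 2 * p + 1) :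
    ∑ a ∈ Finset.range n, ocC p n k θ j a
      = ((2 * ∑ r ∈ Finset.Icc 1 p, (r : ℝ) * k ^ r
          * Real.cos (r * ocAngle θ n j) : ℝ) : ℂ) := by
  have hn0 : 0 < n := by omega
  rw [Finset.range_eq_Ico,
    ← Finset.sum_Ico_consecutive (ocC p n k θ j) (Nat.zero_le (p + 1)) (by omega : p + 1 ≤ n)]
  have hA : ∑ a ∈ Finset.Ico 0 (p + 1), ocC p n k θ j a
      = ∑ r ∈ Finset.Icc 1 p, (r : ℂ) * (k : ℂ) ^ r
          * Complex.exp (((r : ℝ) * ocAngle θ n j : ℝ) * Complex.I) := by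
    rw [← Finset.Ico_add_one_right_eq_Icc,
      ← Finset.sum_Ico_consecutive (ocC p n k θ j) (Nat.zero_le 1) (by omega : 1 ≤ p + 1)]
    have h0 : ∑ a ∈ Finset.Ico 0 1, ocC p n k θ j a = 0 := by
      simp [ocC]
    rw [h0, zero_add]
    refine Finset.sum_congr rfl fun a ha => ?_
    rw [Finset.mem_Ico] at ha
    rw [ocC, if_pos (by omega : a ≤ p), ocX_pow]
    norm_cast
  have hB : ∑ a ∈ Finset.Ico (p + 1) n, ocC p n k θ j a
      = ∑ r ∈ Finset.Icc 1 p, (r : ℂ) * (k : ℂ) ^ r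
          * Complex.exp ((-((r : ℝ) * ocAngle θ n j) : ℝ) * Complex.I) := by
    refine Finset.sum_nbij' (fun a => n - a) (fun r => n - r) ?_ ?_ ?_ ?_ ?_
    · intro a ha; simp only [Finset.mem_Ico] at ha; simp only [Finset.mem_Icc]; omega
    · intro r hr; simp only [Finset.mem_Icc] at hr; simp only [Finset.mem_Ico]; omega
    · intro a ha; simp only [Finset.mem_Ico] at ha; omega
    · intro r hr; simp only [Finset.mem_Icc] at hr; omega
    · intro a ha
      rw [Finset.mem_Ico] at ha
      rw [ocC, if_neg (by omega : ¬ a ≤ p)]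
      have h1 : ((n - a : ℕ) : ℂ) * (k : ℂ) ^ (n - a) * Complex.exp (-θ * Complex.I)
            * ocX θ n j ^ a
          = ((n - a : ℕ) : ℂ) * (k : ℂ) ^ (n - a)
            * (Complex.exp (-θ * Complex.I) * ocX θ n j ^ a) := by ring
      rw [h1, oc_back n θ j hn0 a ha.2]
  rw [hA, hB, ← Finset.sum_add_distrib]
  push_cast
  rw [Finset.mul_sum]
  refine Finset.sum_congr rfl fun r hr => ?_
  have := Complex.two_cos (x := ((r : ℝ) * ocAngle θ n j : ℝ))
  push_cast at this ⊢
  linear_combination (-((r : ℂ) * (k : ℂ) ^ r)) * this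
end aux3

lemma ocX_inj (n : ℕ) (θ : ℝ) (hn : 0 < n) :
    Function.Injective (fun j : Fin n => ocX θ n j) := by
  intro a b hab
  simp only [ocX] at hab
  rw [Complex.exp_eq_exp_iff_exists_int] at hab
  obtain ⟨m, hm⟩ := hab
  have h2 : ((ocAngle θ n a : ℝ) : ℂ) * Complex.I
      = ((ocAngle θ n b + m * (2 * Real.pi) : ℝ) : ℂ) * Complex.I := by
    push_cast at hm ⊢
    linear_combination hm
  have h1 := mul_right_cancel₀ Complex.I_ne_zero h2
  have h0 : ocAngle θ n a = ocAngle θ n b + m * (2 * Real.pi) := by exact_mod_cast h1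
  have ha := oc_n_angle n θ a hn
  have hb := oc_n_angle n θ b hn
  have h4 : (2 * Real.pi) * (a.val : ℝ) = (2 * Real.pi) * ((b.val : ℝ) + m * n) := by
    have h5 : (n : ℝ) * ocAngle θ n a = (n : ℝ) * (ocAngle θ n b + m * (2 * Real.pi)) := by
      rw [h0]
    rw [ha] at h5
    linear_combination h5 + hb
  have h6 : (a.val : ℝ) = (b.val : ℝ) + m * n :=
    mul_left_cancel₀ (by positivity : (2 * Real.pi : ℝ) ≠ 0) h4
  have h7 : (a.val : ℤ) = (b.val : ℤ) + m * n := by exact_mod_cast h6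
  have ha' : (a.val : ℤ) < n := by exact_mod_cast a.isLt
  have hb' : (b.val : ℤ) < n := by exact_mod_cast b.isLt
  have hn' : (0 : ℤ) < n := by exact_mod_cast hn
  have ha0 : (0 : ℤ) ≤ (a.val : ℤ) := by positivity
  have hb0 : (0 : ℤ) ≤ (b.val : ℤ) := by positivity
  have hlt : m * n < n := by omega
  have hgt : -(n : ℤ) < m * n := by omega
  have hge : m ≤ 0 := by nlinarith
  have hle : 0 ≤ m := by nlinarith
  have hm0 : m = 0 := le_antisymm hge hle
  rw [hm0] at h7
  simp at h7
  exact Fin.ext (by omega)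


/-- Distance spectrum of a conjugate skew gain graph on the odd cycle `C_n`,
`n = 2p+1`, where the edge `vₙv₁` has skew gain `k·e^{iθ}` and all other edges
have skew gain `k`.  The matrix `D` below is the distance matrix: its `(i,j)`
entry is `d(i,j)` times the product of the edge skew gains along the unique
shortest oriented path from `i` to `j` (the forward distance from `i` to `j` is
`a = (j - i) mod n`; the shortest path goes forward when `a ≤ p`, and it crosses
the distinguished edge precisely when it wraps around). -/

theorem distance_spectrum_odd_cycle_csg (p : ℕ) (hp : 0 < p) (k θ : ℝ) (hk : 0 < k)
    (n : ℕ) (hn : n = 2 * p + 1) (D : Matrix (Fin n) (Fin n) ℂ)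
    (hD : ∀ i j : Fin n,
      D i j =
        if (j.val + n - i.val) % n ≤ p then
          (((j.val + n - i.val) % n : ℕ) : ℂ) * (k : ℂ) ^ ((j.val + n - i.val) % n) *
            (if j.val < i.val then Complex.exp (θ * Complex.I) else 1)
        else
          ((n - (j.val + n - i.val) % n : ℕ) : ℂ) *
            (k : ℂ) ^ (n - (j.val + n - i.val) % n) *
            (if i.val < j.val then Complex.exp (-θ * Complex.I) else 1)) :
    spectrum ℂ D =
      Set.range (fun j : Fin n =>
        ((2 * ∑ r ∈ Finset.Icc 1 p, (r : ℝ) * k ^ r *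
            Real.cos (r * ((2 * Real.pi * j.val + θ) / n)) : ℝ) : ℂ)) := by
  have hn0 : 0 < n := by omega
  haveI : NeZero n := ⟨by omega⟩
  set P : Matrix (Fin n) (Fin n) ℂ := Matrix.of (fun i j : Fin n => ocX θ n j ^ (i.val)) with hP
  set lam : Fin n → ℂ := fun j : Fin n =>
    ((2 * ∑ r ∈ Finset.Icc 1 p, (r : ℝ) * k ^ r *
        Real.cos (r * ((2 * Real.pi * j.val + θ) / n)) : ℝ) : ℂ) with hlam
  have hlam' : ∀ j, lam j = ((2 * ∑ r ∈ Finset.Icc 1 p, (r : ℝ) * k ^ r *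
      Real.cos (r * ocAngle θ n j) : ℝ) : ℂ) := fun j => rfl
  have hterm : ∀ (ii j a : Fin n),
      D ii (ii + a) * P (ii + a) j = ocC p n k θ j a.val * P ii j := by
    intro ii j a
    have hii := ii.isLt; have ha := a.isLt
    simp only [hP, Matrix.of_apply]
    rw [hD, Fin.val_add]
    by_cases hw : ii.val + a.val < n
    · rw [Nat.mod_eq_of_lt hw]
      have hmod : (ii.val + a.val + n - ii.val) % n = a.val := by
        rw [show ii.val + a.val + n - ii.val = a.val + n by omega, Nat.add_mod_right,
          Nat.mod_eq_of_lt ha]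
      rw [hmod]
      by_cases hap : a.val ≤ p
      · rw [if_pos hap, if_neg (by omega : ¬ ii.val + a.val < ii.val), ocC, if_pos hap,
          pow_add]
        ring
      · rw [if_neg hap, ocC, if_neg hap, if_pos (by omega : ii.val < ii.val + a.val), pow_add]
        ring
    · have hv : (ii.val + a.val) % n = ii.val + a.val - n := by
        rw [Nat.mod_eq_sub_mod (by omega), Nat.mod_eq_of_lt (by omega)]
      rw [hv]
      have hmod : (ii.val + a.val - n + n - ii.val) % n = a.val := by
        rw [show ii.val + a.val - n + n - ii.val = a.val by omega, Nat.mod_eq_of_lt ha]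
      rw [hmod]
      have hpow : ocX θ n j ^ (a.val) * ocX θ n j ^ (ii.val)
          = ocX θ n j ^ (ii.val + a.val - n) * Complex.exp (θ * Complex.I) := by
        rw [← ocX_pow_n n θ j hn0, ← pow_add, ← pow_add]
        congr 1
        omega
      by_cases hap : a.val ≤ p
      · rw [if_pos hap, if_pos (by omega : ii.val + a.val - n < ii.val), ocC, if_pos hap]
        linear_combination (-((a.val : ℂ) * (k : ℂ) ^ a.val)) * hpow
      · rw [if_neg hap, if_neg (by omega : ¬ ii.val < ii.val + a.val - n), ocC, if_neg hap]
        have hee : Complex.exp (-θ * Complex.I) * Complex.exp (θ * Complex.I) = 1 := by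
          rw [← Complex.exp_add, show (-θ : ℂ) * Complex.I + θ * Complex.I = 0 by ring,
            Complex.exp_zero]
        linear_combination
          (-(((n - a.val : ℕ) : ℂ) * (k : ℂ) ^ (n - a.val)
              * Complex.exp (-θ * Complex.I))) * hpow
            - (((n - a.val : ℕ) : ℂ) * (k : ℂ) ^ (n - a.val)
              * ocX θ n j ^ (ii.val + a.val - n)) * hee
  have key : D * P = P * Matrix.diagonal lam := by
    ext ii j
    rw [Matrix.mul_apply, Matrix.mul_diagonal]
    calc ∑ m, D ii m * P m j
        = ∑ a : Fin n, D ii (ii + a) * P (ii + a) j :=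
          (Fintype.sum_equiv (Equiv.addLeft ii)
            (fun a => D ii (ii + a) * P (ii + a) j)
            (fun m => D ii m * P m j) (fun a => rfl)).symm
      _ = ∑ a : Fin n, ocC p n k θ j a.val * P ii j :=
          Finset.sum_congr rfl fun a _ => hterm ii j a
      _ = (∑ a ∈ Finset.range n, ocC p n k θ j a) * P ii j := by
          rw [← Finset.sum_mul, Fin.sum_univ_eq_sum_range (fun a => ocC p n k θ j a) n]
      _ = P ii j * lam j := by
          rw [ocC_sum p n k θ j hn, hlam' j, mul_comm]
  have hdet : P.det ≠ 0 := by
    have hPt : P = Matrix.transpose (Matrix.vandermonde (fun j : Fin n => ocX θ n j)) := by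
      ext i j
      simp [Matrix.vandermonde, Matrix.transpose_apply, hP]
    rw [hPt, Matrix.det_transpose]
    exact Matrix.det_vandermonde_ne_zero_iff.mpr (ocX_inj n θ hn0)
  have hPu : IsUnit P := (Matrix.isUnit_iff_isUnit_det P).mpr (isUnit_iff_ne_zero.mpr hdet)
  obtain ⟨u, hu⟩ := hPu
  have hDconj : D = (u : Matrix (Fin n) (Fin n) ℂ) * Matrix.diagonal lam
      * ((u⁻¹ : (Matrix (Fin n) (Fin n) ℂ)ˣ) : Matrix (Fin n) (Fin n) ℂ) := by
    have h1 : D * (u : Matrix (Fin n) (Fin n) ℂ)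
        = (u : Matrix (Fin n) (Fin n) ℂ) * Matrix.diagonal lam := by rw [hu]; exact key
    calc D = D * ((u : Matrix (Fin n) (Fin n) ℂ)
            * ((u⁻¹ : (Matrix (Fin n) (Fin n) ℂ)ˣ) : Matrix (Fin n) (Fin n) ℂ)) := by
            rw [Units.mul_inv, mul_one]
      _ = D * (u : Matrix (Fin n) (Fin n) ℂ)
            * ((u⁻¹ : (Matrix (Fin n) (Fin n) ℂ)ˣ) : Matrix (Fin n) (Fin n) ℂ) := by
            rw [mul_assoc]
      _ = _ := by rw [h1]
  rw [hDconj, spectrum.units_conjugate, spectrum_diagonal]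
end
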